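/- arXiv:2009.09202 — 2 statements merged into one kernel-verified Lean document; each statement's English description precedes it below -/
import Mathlib

section
/- For n ≥ 3, the function f on the vertices of S(K_n, 3) defined (with indices modulo n) by f(v_iv_jv_{i−1}) = 1 for all i,j, f(v_iv_jv_{i+1}) = 1 for all i and all j ∉ {i−1, i+1}, and f(v) = 0 otherwise, is an Italian dominating function of S(K_n, 3) of weight 2n(n − 1). Consequently γ_I(S(K_n,3)) ≤ 2n(n−1). -/
open Finset
open scoped Classical

/-- An Italian dominating function: `f : V → {0,1,2}` such that every vertex with
value 0 has neighbours of total weight at least 2. -/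
def IsIDF {V : Type*} [Fintype V] (G : SimpleGraph V) (f : V → ℕ) : Prop :=
  (∀ v, f v ≤ 2) ∧
  ∀ v, f v = 0 → 2 ≤ ∑ u ∈ Finset.univ.filter fun u => G.Adj v u, f u

/-- The Italian domination number: minimum weight of an IDF. -/
noncomputable def italianDomNumber {V : Type*} [Fintype V] (G : SimpleGraph V) : ℕ :=
  sInf {w | ∃ f, IsIDF G f ∧ ∑ v, f v = w}

/-- A perfect Italian dominating function: every vertex with value 0 has neighbours
of total weight exactly 2. -/
def IsPIDF {V : Type*} [Fintype V] (G : SimpleGraph V) (f : V → ℕ) : Prop :=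
  (∀ v, f v ≤ 2) ∧
  ∀ v, f v = 0 → (∑ u ∈ Finset.univ.filter fun u => G.Adj v u, f u) = 2

/-- The perfect Italian domination number. -/
noncomputable def perfectItalianDomNumber {V : Type*} [Fintype V] (G : SimpleGraph V) : ℕ :=
  sInf {w | ∃ f, IsPIDF G f ∧ ∑ v, f v = w}

/-- The Sierpiński graph `S(K_n, t)` on words of length `t` over an alphabet of size `n`. -/
def sierpinskiGraph (n t : ℕ) : SimpleGraph (Fin t → Fin n) :=
  SimpleGraph.fromRel (fun u v => ∃ i : Fin t,
    (∀ j, j < i → u j = v j) ∧ u i ≠ v i ∧ ∀ j, i < j → u j = v i ∧ v j = u i)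

/-! A word `abc` of weight `0` has the weight-`1` neighbour `ab(a-1)`. A second one is `ab(a+1)`
if `b ∉ {a-1, a+1}`, the word `acb` if `b ≠ c`, and otherwise `b = c = a+1` and it is the
extreme vertex `(a+1)aa`. For fixed `a, b` the letters `c` of weight `1` are `a-1`, together with
`a+1` for the `n - 2` letters `b ∉ {a-1, a+1}`; so the weight is `n (n + (n - 2)) = 2n(n-1)`. -/

theorem SimpleGraph.two_le_sum_neighbors {V : Type*} [Fintype V] [DecidableEq V]
    {G : SimpleGraph V} [DecidableRel G.Adj] {f : V → ℕ} {v u₁ u₂ : V}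
    (h₁ : G.Adj v u₁) (h₂ : G.Adj v u₂) (hne : u₁ ≠ u₂) (hf₁ : 1 ≤ f u₁)
    (hf₂ : 1 ≤ f u₂) :
    2 ≤ ∑ u ∈ univ.filter (G.Adj v ·), f u :=
  calc 2 ≤ f u₁ + f u₂ := by omega
    _ = ∑ u ∈ {u₁, u₂}, f u := (sum_pair hne).symm
    _ ≤ ∑ u ∈ univ.filter (G.Adj v ·), f u :=
      sum_le_sum_of_subset (by simp [insert_subset_iff, h₁, h₂])

theorem italianDomNumber_le_sum {V : Type*} [Fintype V] {G : SimpleGraph V} {f : V → ℕ}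
    (hf : IsIDF G f) : italianDomNumber G ≤ ∑ v, f v :=
  Nat.sInf_le ⟨f, hf, rfl⟩

theorem Fintype.sum_fin_three_arrow {α M : Type*} [Fintype α] [AddCommMonoid M]
    (g : (Fin 3 → α) → M) : ∑ w, g w = ∑ a, ∑ b, ∑ c, g ![a, b, c] := by
  rw [← (Fin.consEquiv fun _ => α).sum_comp, Fintype.sum_prod_type]
  refine Fintype.sum_congr _ _ fun a => ?_
  rw [← (finTwoArrowEquiv α).symm.sum_comp, Fintype.sum_prod_type]
  rfl

theorem sub_ne_add_of_add_self_ne_zero {G : Type*} [AddGroup G] {o : G} (ho : o + o ≠ 0)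
    (a : G) : a - o ≠ a + o := by
  rw [Ne, sub_eq_add_neg, add_right_inj, neg_eq_iff_add_eq_zero]
  exact ho

namespace SierpinskiGraph

variable {n : ℕ}

theorem adj_of_ne_last (a b : Fin n) {c c' : Fin n} (h : c ≠ c') :
    (sierpinskiGraph n 3).Adj ![a, b, c] ![a, b, c'] := by
  refine (SimpleGraph.fromRel_adj ..).mpr
    ⟨fun he => h (congrFun he 2), Or.inl ⟨2, ?_, h, ?_⟩⟩ <;>
    intro j hj <;> fin_cases j <;> simp_all

theorem adj_swap (a : Fin n) {b c : Fin n} (h : b ≠ c) :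
    (sierpinskiGraph n 3).Adj ![a, b, c] ![a, c, b] := by
  refine (SimpleGraph.fromRel_adj ..).mpr
    ⟨fun he => h (congrFun he 1), Or.inl ⟨1, ?_, h, ?_⟩⟩ <;>
    intro j hj <;> fin_cases j <;> simp_all

theorem adj_extreme {a b : Fin n} (h : a ≠ b) :
    (sierpinskiGraph n 3).Adj ![a, b, b] ![b, a, a] := by
  refine (SimpleGraph.fromRel_adj ..).mpr
    ⟨fun he => h (congrFun he 0), Or.inl ⟨0, ?_, h, ?_⟩⟩ <;>
    intro j hj <;> fin_cases j <;> simp_all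

def shiftIDF (o : Fin n) (w : Fin 3 → Fin n) : ℕ :=
  if w 2 = w 0 - o ∨ (w 2 = w 0 + o ∧ w 1 ≠ w 0 - o ∧ w 1 ≠ w 0 + o) then 1 else 0

theorem shiftIDF_cons (o a b c : Fin n) : shiftIDF o ![a, b, c] =
    if c = a - o ∨ (c = a + o ∧ b ≠ a - o ∧ b ≠ a + o) then 1 else 0 := rfl

variable [NeZero n] {o : Fin n}

theorem sum_shiftIDF_last (ho : o + o ≠ 0) (a b : Fin n) :
    ∑ c, shiftIDF o ![a, b, c] = if b ≠ a - o ∧ b ≠ a + o then 2 else 1 := by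
  by_cases hb : b ≠ a - o ∧ b ≠ a + o
  · have hsupp : univ.filter (fun c => c = a - o ∨ (c = a + o ∧ b ≠ a - o ∧ b ≠ a + o)) =
        {a - o, a + o} := by
      ext; simp [hb]
    simp only [shiftIDF_cons, sum_boole, hsupp, if_pos hb,
      card_pair (sub_ne_add_of_add_self_ne_zero ho a), Nat.cast_ofNat]
  · simp [shiftIDF_cons, hb]

theorem sum_shiftIDF (ho : o + o ≠ 0) : ∑ w, shiftIDF o w = 2 * n * (n - 1) := by
  have hpair (a : Fin n) : #{a - o, a + o} = 2 := card_pair (sub_ne_add_of_add_self_ne_zero ho a)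
  have hn : 2 ≤ n := by
    simpa only [hpair 0, Fintype.card_fin] using card_le_univ ({0 - o, 0 + o} : Finset (Fin n))
  have hrow (a : Fin n) : ∑ b, ∑ c, shiftIDF o ![a, b, c] = n + (n - 2) := by
    have hsplit (b : Fin n) : ∑ c, shiftIDF o ![a, b, c] =
        1 + if b ∉ ({a - o, a + o} : Finset _) then 1 else 0 := by
      rw [sum_shiftIDF_last ho]
      simp only [mem_insert, mem_singleton, not_or]
      split_ifs <;> rfl
    simp only [hsplit, sum_add_distrib, sum_const, card_univ, Fintype.card_fin, smul_eq_mul,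
      mul_one, sum_boole, filter_notMem_eq_sdiff]
    rw [card_univ_sdiff, hpair, Fintype.card_fin, Nat.cast_id]
  rw [Fintype.sum_fin_three_arrow]
  simp only [hrow, sum_const, card_univ, Fintype.card_fin, smul_eq_mul]
  rw [show n + (n - 2) = 2 * (n - 1) by omega]
  ring

theorem isIDF_shiftIDF (ho : o ≠ 0) (ho2 : o + o ≠ 0) :
    IsIDF (sierpinskiGraph n 3) (shiftIDF o) := by
  refine ⟨fun w => by unfold shiftIDF; split <;> omega, fun w hw => ?_⟩
  obtain ⟨a, b, c, rfl⟩ : ∃ a b c, w = ![a, b, c] :=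
    ⟨w 0, w 1, w 2, by ext j; fin_cases j <;> rfl⟩
  simp only [shiftIDF_cons, ite_eq_right_iff, one_ne_zero, imp_false, not_or, not_and] at hw
  obtain ⟨hc, hc'⟩ := hw
  have hprev : 1 ≤ shiftIDF o ![a, b, a - o] := by simp [shiftIDF_cons]
  by_cases hb : b ≠ a - o ∧ b ≠ a + o
  · refine SimpleGraph.two_le_sum_neighbors (adj_of_ne_last a b hc)
      (adj_of_ne_last a b fun h => hc' h hb.1 hb.2) ?_ hprev (by simp [shiftIDF_cons, hb])
    exact fun h => sub_ne_add_of_add_self_ne_zero ho2 a (congrFun h 2)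
  have hb : b = a - o ∨ b = a + o := by tauto
  by_cases hbc : b = c
  · subst hbc
    have hb : b = a + o := hb.resolve_left hc
    have hab : a ≠ b := hb ▸ (add_ne_left.mpr ho).symm
    refine SimpleGraph.two_le_sum_neighbors (adj_of_ne_last a b hc) (adj_extreme hab)
      (fun h => hab (congrFun h 0)) hprev (by simp [shiftIDF_cons, hb])
  · refine SimpleGraph.two_le_sum_neighbors (adj_of_ne_last a b hc) (adj_swap a hbc)
      (fun h => hbc (congrFun h 1)) hprev ?_
    rcases hb with hb | hb
    · simp [shiftIDF_cons, hb]
    · have hc'' : c ≠ a + o := fun h => hbc (hb.trans h.symm)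
      simp [shiftIDF_cons, hb, hc, hc'']

end SierpinskiGraph

open SierpinskiGraph

theorem sierpinski_three_explicit_IDF (n : ℕ) (hn : 3 ≤ n) :
    ∃ f : (Fin 3 → Fin n) → ℕ,
      (∀ w : Fin 3 → Fin n,
        f w = if w 2 = w 0 - ⟨1, by omega⟩ ∨
                 (w 2 = w 0 + ⟨1, by omega⟩ ∧ w 1 ≠ w 0 - ⟨1, by omega⟩ ∧ w 1 ≠ w 0 + ⟨1, by omega⟩) then 1 else 0) ∧
      IsIDF (sierpinskiGraph n 3) f ∧
      (∑ w, f w) = 2 * n * (n - 1) ∧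
      italianDomNumber (sierpinskiGraph n 3) ≤ 2 * n * (n - 1) := by
  have : NeZero n := ⟨by omega⟩
  let o : Fin n := ⟨1, by omega⟩
  have ho : o ≠ 0 := by simp [o, Fin.ext_iff]
  have ho2 : o + o ≠ 0 := by
    simp [o, Fin.ext_iff, Fin.val_add, Nat.mod_eq_of_lt (by omega : 2 < n)]
  have hIDF := isIDF_shiftIDF ho ho2
  have hsum := sum_shiftIDF ho2
  exact ⟨shiftIDF o, fun _ => rfl, hIDF, hsum, hsum ▸ italianDomNumber_le_sum hIDF⟩
end

section
/- For n ≥ 3, the perfect Italian domination number of the Sierpiński graph S(K_n, 2) is 2n − 1. -/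
open Finset
open scoped Classical

lemma eq_iff2 {n : ℕ} (u v : Fin 2 → Fin n) : u = v ↔ u 0 = v 0 ∧ u 1 = v 1 := by
  rw [funext_iff, Fin.forall_fin_two]

lemma adj_iff {n : ℕ} (u v : Fin 2 → Fin n) :
    (sierpinskiGraph n 2).Adj u v ↔ u ≠ v ∧ (u 0 = v 0 ∨ (u 0 = v 1 ∧ u 1 = v 0)) := by
  show (u ≠ v ∧ _) ↔ _
  simp only [Fin.exists_fin_two]
  constructor
  · rintro ⟨hne, h | h⟩
    · refine ⟨hne, ?_⟩
      rcases h with ⟨_, hne0, h01⟩ | ⟨hlt, _, _⟩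
      · exact Or.inr ⟨(h01 1 (by decide)).2.symm, (h01 1 (by decide)).1⟩
      · exact Or.inl (hlt 0 (by decide))
    · refine ⟨hne, ?_⟩
      rcases h with ⟨_, hne0, h01⟩ | ⟨hlt, _, _⟩
      · exact Or.inr ⟨(h01 1 (by decide)).1.symm, (h01 1 (by decide)).2⟩
      · exact Or.inl (hlt 0 (by decide)).symm
  · rintro ⟨hne, h0 | ⟨h1, h2⟩⟩
    · refine ⟨hne, Or.inl (Or.inr ⟨?_, ?_, ?_⟩)⟩
      · intro j hj; fin_cases j
        · exact h0
        · exact absurd hj (by decide)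
      · intro h; exact hne ((eq_iff2 u v).2 ⟨h0, h⟩)
      · intro j hj; fin_cases j <;> exact absurd hj (by decide)
    · have h00 : u 0 ≠ v 0 := fun h => hne ((eq_iff2 u v).2 ⟨h, by rw [h2, ← h, h1]⟩)
      refine ⟨hne, Or.inl (Or.inl ⟨?_, h00, ?_⟩)⟩
      · intro j hj; fin_cases j <;> exact absurd hj (by decide)
      · intro j hj
        have : j = 1 := by fin_cases j <;> first | rfl | exact absurd hj (by decide)
        subst this; exact ⟨h2, h1.symm⟩

/-- pair vertex -/
def pr {n : ℕ} (a b : Fin n) : Fin 2 → Fin n := ![a, b]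

@[simp] lemma pr0 {n : ℕ} (a b : Fin n) : pr a b 0 = a := rfl
@[simp] lemma pr1 {n : ℕ} (a b : Fin n) : pr a b 1 = b := rfl

lemma eq_pr {n : ℕ} (u : Fin 2 → Fin n) : u = pr (u 0) (u 1) := by
  funext j; fin_cases j <;> rfl

lemma pr_inj {n : ℕ} {a b c d : Fin n} : pr a b = pr c d ↔ a = c ∧ b = d := by
  rw [eq_iff2]; simp

/-- Sum over all vertices as double sum. -/
lemma sum_vertices {n : ℕ} (f : (Fin 2 → Fin n) → ℕ) :
    ∑ v, f v = ∑ a : Fin n, ∑ b : Fin n, f (pr a b) := by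
  have h1 : ∑ p : Fin n × Fin n, f (pr p.1 p.2) = ∑ v, f v :=
    Fintype.sum_bijective (fun p : Fin n × Fin n => pr p.1 p.2)
      ⟨fun p q h => by have := pr_inj.1 h; exact Prod.ext this.1 this.2,
       fun u => ⟨(u 0, u 1), (eq_pr u).symm⟩⟩ _ _ (fun p => rfl)
  rw [← h1, Fintype.sum_prod_type]

/-- Sum over a copy. -/
lemma copy_sum {n : ℕ} (f : (Fin 2 → Fin n) → ℕ) (a : Fin n) :
    ∑ v ∈ univ.filter (fun v => v 0 = a), f v = ∑ b : Fin n, f (pr a b) := by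
  refine Finset.sum_nbij' (fun v => v 1) (fun b => pr a b) ?_ ?_ ?_ ?_ ?_
  · intro v hv; exact mem_univ _
  · intro b hb; simp
  · intro v hv; simp only [mem_filter] at hv
    rw [← hv.2]; exact (eq_pr v).symm
  · intro b hb; rfl
  · intro v hv; simp only [mem_filter] at hv
    rw [← hv.2]; exact congrArg f (eq_pr v)

/-- Neighbours of `pr a b` are contained in copy `a` plus the bridge vertex. -/
lemma nbr_subset {n : ℕ} (a b : Fin n) :
    univ.filter (fun u => (sierpinskiGraph n 2).Adj (pr a b) u) ⊆
      insert (pr b a) (univ.filter fun u => u 0 = a) := by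
  intro u hu
  simp only [mem_filter, mem_univ, true_and] at hu
  rcases (adj_iff _ _).1 hu with ⟨hne, h | ⟨h1, h2⟩⟩
  · exact mem_insert_of_mem (by simp [h.symm])
  · have : u = pr b a := by rw [eq_pr u, ← h1, ← h2]; rfl
    rw [this]; exact mem_insert_self _ _

section Lower
variable {n : ℕ} (f : (Fin 2 → Fin n) → ℕ)
  (hf : ∀ v, f v = 0 →
    (∑ u ∈ Finset.univ.filter fun u => (sierpinskiGraph n 2).Adj v u, f u) = 2)

lemma nbrSum_le (a b : Fin n) :
    ∑ u ∈ univ.filter (fun u => (sierpinskiGraph n 2).Adj (pr a b) u), f u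
      ≤ f (pr b a) + ∑ b', f (pr a b') := by
  calc ∑ u ∈ univ.filter (fun u => (sierpinskiGraph n 2).Adj (pr a b) u), f u
      ≤ ∑ u ∈ insert (pr b a) (univ.filter fun u => u 0 = a), f u :=
        Finset.sum_le_sum_of_subset (nbr_subset a b)
    _ ≤ f (pr b a) + ∑ u ∈ univ.filter (fun u => u 0 = a), f u := by
        by_cases h : pr b a ∈ (univ.filter fun u => u 0 = a)
        · rw [Finset.insert_eq_self.2 h]; exact Nat.le_add_left _ _
        · rw [Finset.sum_insert h]
    _ = f (pr b a) + ∑ b', f (pr a b') := by rw [copy_sum]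

include hf

lemma one_le_w (a : Fin n) : 1 ≤ ∑ b, f (pr a b) := by
  by_contra h
  have h0 : ∑ b, f (pr a b) = 0 := by omega
  have hall : ∀ b ∈ univ, f (pr a b) = 0 := Finset.sum_eq_zero_iff.1 h0
  have h2 := hf (pr a a) (hall a (mem_univ a))
  have hle := nbrSum_le f a a
  rw [h2, h0, hall a (mem_univ a)] at hle
  omega

lemma w_eq_one {a : Fin n} (h1 : ∑ b, f (pr a b) = 1) :
    f (pr a a) = 1 ∧ ∀ b, b ≠ a → f (pr a b) = 0 := by
  have hd : ∑ b, f (pr a b) = f (pr a a) + ∑ b ∈ univ.erase a, f (pr a b) :=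
    (Finset.add_sum_erase _ _ (mem_univ a)).symm
  have haa : f (pr a a) ≠ 0 := by
    intro h0
    have h2 := hf (pr a a) h0
    have hle := nbrSum_le f a a
    rw [h2, h1, h0] at hle
    omega
  rw [h1] at hd
  have hz : ∑ b ∈ univ.erase a, f (pr a b) = 0 := by omega
  exact ⟨by omega, fun b hb =>
    Finset.sum_eq_zero_iff.1 hz b (mem_erase.2 ⟨hb, mem_univ b⟩)⟩

lemma not_two_ones {a a' : Fin n} (ha : a ≠ a')
    (h1 : ∑ b, f (pr a b) = 1) (h1' : ∑ b, f (pr a' b) = 1) : False := by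
  obtain ⟨_, hz⟩ := w_eq_one f hf h1
  obtain ⟨_, hz'⟩ := w_eq_one f hf h1'
  have h0 : f (pr a a') = 0 := hz a' (Ne.symm ha)
  have h2 := hf (pr a a') h0
  have hle := nbrSum_le f a a'
  rw [h2, h1, hz' a ha] at hle
  omega

lemma lower_bound (hn : 3 ≤ n) : 2 * n - 1 ≤ ∑ v, f v := by
  rw [sum_vertices]
  by_cases hex : ∃ a, ∑ b, f (pr a b) = 1
  · obtain ⟨a0, ha0⟩ := hex
    have hdec : ∑ a, ∑ b, f (pr a b)
        = (∑ b, f (pr a0 b)) + ∑ a ∈ univ.erase a0, ∑ b, f (pr a b) :=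
      (Finset.add_sum_erase _ _ (mem_univ a0)).symm
    have h2 : ∀ a ∈ univ.erase a0, 2 ≤ ∑ b, f (pr a b) := by
      intro a ha
      have hne := (mem_erase.1 ha).1
      have hge := one_le_w f hf a
      rcases Nat.lt_or_ge (∑ b, f (pr a b)) 2 with h | h
      · have : ∑ b, f (pr a b) = 1 := by omega
        exact absurd (not_two_ones f hf hne this ha0) (fun x => x)
      · exact h
    have hcard : (univ.erase a0).card = n - 1 := by
      rw [card_erase_of_mem (mem_univ _), card_univ, Fintype.card_fin]
    have hsum : (n - 1) * 2 ≤ ∑ a ∈ univ.erase a0, ∑ b, f (pr a b) := by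
      calc (n - 1) * 2 = (univ.erase a0).card • 2 := by rw [hcard, smul_eq_mul]
        _ ≤ _ := Finset.card_nsmul_le_sum _ _ _ h2
    omega
  · push_neg at hex
    have h2 : ∀ a ∈ (univ : Finset (Fin n)), 2 ≤ ∑ b, f (pr a b) := by
      intro a _
      have hge := one_le_w f hf a
      have := hex a
      omega
    have hsum : n * 2 ≤ ∑ a, ∑ b, f (pr a b) := by
      calc n * 2 = (univ : Finset (Fin n)).card • 2 := by
            rw [card_univ, Fintype.card_fin, smul_eq_mul]
        _ ≤ _ := Finset.card_nsmul_le_sum _ _ _ h2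
    omega

end Lower

section Upper
variable {n : ℕ} [NeZero n]

/-- The optimal PIDF: weight 1 on all `(a,a)` and on `(a,0)`. -/
def Fopt : (Fin 2 → Fin n) → ℕ := fun v => if v 1 = v 0 ∨ v 1 = 0 then 1 else 0

lemma Fopt_pr (a b : Fin n) : Fopt (pr a b) = if b = a ∨ b = 0 then 1 else 0 := rfl

lemma Fopt_copy (a : Fin n) :
    ∑ b, Fopt (pr a b) = if a = 0 then 1 else 2 := by
  have hf : (univ.filter fun b : Fin n => b = a ∨ b = 0) = {a, 0} := by
    ext b; simp [mem_insert]
  have : ∑ b, Fopt (pr a b) = (univ.filter fun b : Fin n => b = a ∨ b = 0).card := by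
    rw [Finset.card_filter]
    exact Finset.sum_congr rfl fun b _ => Fopt_pr a b
  rw [this, hf]
  by_cases ha : a = 0
  · subst ha; simp
  · rw [if_neg ha, card_insert_of_notMem (by simp [ha]), card_singleton]

lemma Fopt_total (hn : 3 ≤ n) : ∑ v : Fin 2 → Fin n, Fopt v = 2 * n - 1 := by
  rw [sum_vertices (Fopt (n := n))]
  have h1 : ∑ a : Fin n, ∑ b, Fopt (pr a b) = ∑ a : Fin n, if a = 0 then 1 else 2 :=
    Finset.sum_congr rfl fun a _ => Fopt_copy a
  rw [h1, ← Finset.add_sum_erase _ _ (mem_univ (0 : Fin n))]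
  have h2 : ∑ a ∈ univ.erase (0 : Fin n), (if a = 0 then 1 else 2)
      = ∑ a ∈ univ.erase (0 : Fin n), 2 :=
    Finset.sum_congr rfl fun a ha => if_neg (mem_erase.1 ha).1
  rw [h2, Finset.sum_const, card_erase_of_mem (mem_univ _), card_univ, Fintype.card_fin,
    if_pos rfl, smul_eq_mul]
  omega

omit [NeZero n] in
lemma nbr_eq (a b : Fin n) (hab : b ≠ a) :
    univ.filter (fun u => (sierpinskiGraph n 2).Adj (pr a b) u)
      = insert (pr b a) ((univ.filter fun u => u 0 = a).erase (pr a b)) := by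
  ext u
  simp only [mem_filter, mem_univ, true_and, mem_insert, mem_erase]
  constructor
  · intro hu
    rcases (adj_iff _ _).1 hu with ⟨hne, h | ⟨h1, h2⟩⟩
    · exact Or.inr ⟨fun h' => hne h'.symm, by simp [h.symm]⟩
    · left; rw [eq_pr u, ← h1, ← h2]; rfl
  · rintro (rfl | ⟨hne, h0⟩)
    · refine (adj_iff _ _).2 ⟨?_, Or.inr ⟨rfl, rfl⟩⟩
      intro h; exact hab ((pr_inj.1 h).1.symm)
    · exact (adj_iff _ _).2 ⟨fun h => hne h.symm, Or.inl (by simp [h0])⟩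

lemma Fopt_pidf :
    ∀ v, Fopt v = 0 →
      (∑ u ∈ Finset.univ.filter fun u => (sierpinskiGraph n 2).Adj v u, Fopt u) = 2 := by
  intro v hv
  have hcond : ¬(v 1 = v 0 ∨ v 1 = 0) := by
    intro h; simp only [Fopt, if_pos h] at hv
    omega
  push_neg at hcond
  obtain ⟨hba, hb0⟩ := hcond
  set a := v 0 with ha
  set b := v 1 with hb
  have hv' : v = pr a b := eq_pr v
  rw [hv', nbr_eq a b hba]
  have hnotmem : pr b a ∉ (univ.filter fun u : Fin 2 → Fin n => u 0 = a).erase (pr a b) := by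
    simp only [mem_erase, mem_filter, mem_univ, true_and, not_and, pr0]
    intro _; exact hba
  rw [Finset.sum_insert hnotmem,
    Finset.sum_erase _ (by rw [Fopt_pr, if_neg (by push_neg; exact ⟨hba, hb0⟩)]),
    copy_sum, Fopt_copy, Fopt_pr]
  by_cases ha0 : a = 0
  · rw [if_pos ha0, if_pos (Or.inr ha0)]
  · rw [if_neg ha0, if_neg (by push_neg; exact ⟨fun h => hba h.symm, ha0⟩)]

end Upper


theorem perfectItalianDom_sierpinski_two (n : ℕ) (hn : 3 ≤ n) :
    perfectItalianDomNumber (sierpinskiGraph n 2) = 2 * n - 1 := by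
  haveI : NeZero n := ⟨by omega⟩
  have hmem : 2 * n - 1 ∈ {w | ∃ f, IsPIDF (sierpinskiGraph n 2) f ∧ ∑ v, f v = w} :=
    ⟨Fopt, ⟨fun v => by unfold Fopt; split <;> omega, Fopt_pidf⟩, Fopt_total hn⟩
  unfold perfectItalianDomNumber
  apply le_antisymm
  · exact Nat.sInf_le hmem
  · refine le_csInf ⟨_, hmem⟩ ?_
    rintro w ⟨f, ⟨_, hf⟩, rfl⟩
    exact lower_bound f hf hn
end
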